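/- Let B be a nonempty finite type and let M be a Coxeter matrix on B with Coxeter group W. If the abelianization of W is isomorphic to Z/2Z, then the simple graph on B with adjacency i ~ j iff i ≠ j and M i j is odd is connected. -/

import Mathlib

/-!
If the odd-labelled graph were disconnected, sending the generators in the component of a
vertex `i` to the nontrivial element of `ℤ/2` and all others to `1` would respect every Coxeter
relation. This character separates the images of `s i` and `s j` in the abelianization for any `j`
outside that component, although both are nontrivial there (the sign character sends every
generator to the nontrivial element); a group of order two has only one nontrivial element.
-/

namespace CoxeterMatrix

variable {B : Type*} (M : CoxeterMatrix B)

def oddGraph : SimpleGraph B where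
  Adj i j := i ≠ j ∧ Odd (M i j)
  symm := ⟨fun i j hij => ⟨hij.1.symm, M.symmetric i j ▸ hij.2⟩⟩
  loopless := ⟨fun _ hi => hi.1 rfl⟩

theorem isLiftable_of_sq_eq_one {G : Type*} [Monoid G] (hG : ∀ x : G, x ^ 2 = 1) {f : B → G}
    (hf : ∀ i j, M.oddGraph.Adj i j → f i = f j) : M.IsLiftable f := by
  intro i j
  rcases Nat.even_or_odd (M i j) with ⟨k, hk⟩ | hodd
  · rw [hk, ← two_mul, pow_mul, hG, one_pow]
  · obtain rfl | hne := eq_or_ne i j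
    · rw [← sq, hG, one_pow]
    · rw [hf i j ⟨hne, hodd⟩, ← sq, hG, one_pow]

open Classical in
theorem exists_hom_simple_eq_ite_reachable (i : B) :
    ∃ χ : M.Group →* Multiplicative (ZMod 2), ∀ k,
      χ (M.simple k) = if M.oddGraph.Reachable i k then Multiplicative.ofAdd 1 else 1 := by
  have hlift : M.IsLiftable fun k =>
      if M.oddGraph.Reachable i k then Multiplicative.ofAdd (1 : ZMod 2) else 1 := by
    refine M.isLiftable_of_sq_eq_one (by decide) fun k l hkl => ?_
    have hreach : M.oddGraph.Reachable i k ↔ M.oddGraph.Reachable i l :=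
      ⟨fun h => h.trans hkl.reachable, fun h => h.trans hkl.symm.reachable⟩
    simp only [hreach]
  exact ⟨M.toCoxeterSystem.lift ⟨_, hlift⟩, M.toCoxeterSystem.lift_apply_simple hlift⟩

theorem oddGraph_connected_of_card_abelianization_eq_two [Nonempty B]
    (h : Nat.card (Abelianization M.Group) = 2) : M.oddGraph.Connected := by
  refine (SimpleGraph.connected_iff _).2 ⟨fun i j => ?_, ‹_›⟩
  by_contra hij
  obtain ⟨χ, hχ⟩ := M.exists_hom_simple_eq_ite_reachable i
  have hχi : χ (M.simple i) ≠ 1 := by simp [hχ]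
  have hχj : χ (M.simple j) = 1 := by simp [hχ, hij]
  have hi : Abelianization.of (M.simple i) ≠ 1 := fun h1 =>
    hχi (by simpa using congrArg (Abelianization.lift χ) h1)
  have hj : Abelianization.of (M.simple j) ≠ 1 := fun h1 => by
    have hsign := M.toCoxeterSystem.lengthParity_simple j
    rw [M.toCoxeterSystem_simple] at hsign
    simpa [hsign] using congrArg (Abelianization.lift M.toCoxeterSystem.lengthParity) h1
  have hsame := ((Nat.card_eq_two_iff' 1).1 h).unique hi hj
  exact hχi (by simpa [hχj] using congrArg (Abelianization.lift χ) hsame)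

end CoxeterMatrix

theorem stmt_2 (B : Type*) [Nonempty B] (M : CoxeterMatrix B)
    (h : Nonempty (Abelianization M.Group ≃* Multiplicative (ZMod 2))) :
    SimpleGraph.Connected
      { Adj := fun i j => i ≠ j ∧ Odd (M i j)
        symm := ⟨fun i j hij => ⟨hij.1.symm, M.symmetric i j ▸ hij.2⟩⟩
        loopless := ⟨fun i hi => hi.1 rfl⟩ } := by
  obtain ⟨e⟩ := h
  exact M.oddGraph_connected_of_card_abelianization_eq_two <| by
    rw [Nat.card_congr e.toEquiv, Nat.card_eq_fintype_card, Fintype.card_multiplicative,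
      ZMod.card]
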